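/- Adversary lower bound for exact unitary implementation: let D be a finite set, X and Z finite-dimensional complex inner product spaces, O_x a unitary on X and V_x a unitary on Z for each x ∈ D. Suppose there exist a T-query quantum algorithm with oracle acting on X, with state space H, and a linear isometry ι : Z → H, such that for every x ∈ D and every ρ ∈ Z, A(O_x) ι(ρ) = ι(V_x ρ). Then γ₂((V_x − V_y)_{x,y∈D} | (O_x − O_y)_{x,y∈D}) ≤ T. -/

import Mathlib

noncomputable section

open scoped ENNReal ComplexOrder

/-- A linear endomorphism of a finite-dimensional complex inner product space is unitary. -/
def IsUnitaryMap {E : Type*} [NormedAddCommGroup E] [InnerProductSpace ℂ E]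
    [FiniteDimensional ℂ E] (f : E →ₗ[ℂ] E) : Prop :=
  LinearMap.adjoint f ∘ₗ f = LinearMap.id ∧ f ∘ₗ LinearMap.adjoint f = LinearMap.id

/-- Operator norm of a linear map between finite-dimensional inner product spaces. -/
noncomputable def opNorm {E F : Type*} [NormedAddCommGroup E] [InnerProductSpace ℂ E]
    [NormedAddCommGroup F] [InnerProductSpace ℂ F] [FiniteDimensional ℂ E]
    (f : E →ₗ[ℂ] F) : ℝ :=
  ‖LinearMap.toContinuousLinearMap f‖

/-- A complex scalar viewed as a linear map `ℂ → ℂ`. -/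
noncomputable def scalarMap (c : ℂ) : ℂ →ₗ[ℂ] ℂ := c • LinearMap.id

/-- The block-diagonal map `⊕ᵢ Δᵢ` on an `ℓ²`-direct sum of copies of a space. -/
noncomputable def piBlock {ι : Type*} [Fintype ι] {X₁ X₂ : Type*}
    [NormedAddCommGroup X₁] [InnerProductSpace ℂ X₁]
    [NormedAddCommGroup X₂] [InnerProductSpace ℂ X₂]
    (Δ : ι → (X₂ →ₗ[ℂ] X₁)) :
    PiLp 2 (fun _ : ι => X₂) →ₗ[ℂ] PiLp 2 (fun _ : ι => X₁) :=
  (WithLp.linearEquiv 2 ℂ (∀ _ : ι, X₁)).symm.toLinearMap ∘ₗ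
    (LinearMap.pi fun i => Δ i ∘ₗ LinearMap.proj i) ∘ₗ
      (WithLp.linearEquiv 2 ℂ (∀ _ : ι, X₂)).toLinearMap

/-- The relative `γ₂`-norm `γ₂(A | Δ)` of a family `A = (A_{xy} : Z₂ → Z₁)` relative to a
family `Δ = (Δ_{xy} : X₂ → X₁)`: the infimum over `k ∈ ℕ` and factorizations
`A_{xy} = Υ_x* ∘ (Δ_{xy} ⊗ id_{ℂᵏ}) ∘ Φ_y` of `max (max_x ‖Υ_x‖²) (max_y ‖Φ_y‖²)`,
where `X ⊗ ℂᵏ` is realized as the `ℓ²`-direct sum of `k` copies of `X`.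
The infimum of the empty set is `+∞`. -/
noncomputable def relGamma2 {D₁ D₂ : Type*} [Fintype D₁] [Fintype D₂]
    {X₁ X₂ Z₁ Z₂ : Type*}
    [NormedAddCommGroup X₁] [InnerProductSpace ℂ X₁] [FiniteDimensional ℂ X₁]
    [NormedAddCommGroup X₂] [InnerProductSpace ℂ X₂] [FiniteDimensional ℂ X₂]
    [NormedAddCommGroup Z₁] [InnerProductSpace ℂ Z₁] [FiniteDimensional ℂ Z₁]
    [NormedAddCommGroup Z₂] [InnerProductSpace ℂ Z₂] [FiniteDimensional ℂ Z₂]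
    (A : D₁ → D₂ → (Z₂ →ₗ[ℂ] Z₁)) (Δ : D₁ → D₂ → (X₂ →ₗ[ℂ] X₁)) : ℝ≥0∞ :=
  ⨅ (k : ℕ) (Υ : D₁ → (Z₁ →ₗ[ℂ] PiLp 2 (fun _ : Fin k => X₁)))
    (Φ : D₂ → (Z₂ →ₗ[ℂ] PiLp 2 (fun _ : Fin k => X₂)))
    (_ : ∀ x y, A x y =
      LinearMap.adjoint (Υ x) ∘ₗ piBlock (fun _ : Fin k => Δ x y) ∘ₗ Φ y),
    (⨆ x, ENNReal.ofReal (opNorm (Υ x) ^ 2)) ⊔ (⨆ y, ENNReal.ofReal (opNorm (Φ y) ^ 2))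

/-- The state space `S ⊕ (X ⊗ ℂᵐ)` of a quantum query algorithm with oracle acting on `X`,
where the workspace `W₀` is realized as `ℂᵐ` and `X ⊗ ℂᵐ` as the `ℓ²`-sum of `m` copies
of `X`, and `⊕` is the `ℓ²`-direct sum. -/
abbrev stateSpace (S X : Type*) (m : ℕ) := WithLp 2 (S × PiLp 2 (fun _ : Fin m => X))

/-- The query operator `Q(O) = id_S ⊕ (O ⊗ id)`. -/
noncomputable def queryOp {X S : Type*}
    [NormedAddCommGroup X] [InnerProductSpace ℂ X]
    [NormedAddCommGroup S] [InnerProductSpace ℂ S]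
    (m : ℕ) (O : X →ₗ[ℂ] X) : stateSpace S X m →ₗ[ℂ] stateSpace S X m :=
  (WithLp.linearEquiv 2 ℂ (S × PiLp 2 (fun _ : Fin m => X))).symm.toLinearMap ∘ₗ
    (LinearMap.prodMap LinearMap.id (piBlock (fun _ : Fin m => O))) ∘ₗ
      (WithLp.linearEquiv 2 ℂ (S × PiLp 2 (fun _ : Fin m => X))).toLinearMap

/-- The unitary `A(O) = U_T ∘ Q(O)^{ε_T} ∘ ⋯ ∘ U_1 ∘ Q(O)^{ε_1} ∘ U_0` implemented by a
`T`-query algorithm with unitaries `U` and query signs `sgn` (`true` = direct query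
`Q(O)`, `false` = reverse query `Q(O)⁻¹ = Q(O*)`), run with input oracle `O`. -/
noncomputable def runAlg {X S : Type*}
    [NormedAddCommGroup X] [InnerProductSpace ℂ X] [FiniteDimensional ℂ X]
    [NormedAddCommGroup S] [InnerProductSpace ℂ S]
    (m : ℕ) :
    (T : ℕ) → (Fin (T + 1) → (stateSpace S X m →ₗ[ℂ] stateSpace S X m)) →
      (Fin T → Bool) → (X →ₗ[ℂ] X) →
      (stateSpace S X m →ₗ[ℂ] stateSpace S X m)
  | 0, U, _, _ => U 0
  | T + 1, U, sgn, O =>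
      U (Fin.last (T + 1)) ∘ₗ
        ((if sgn (Fin.last T) then queryOp m O else queryOp m (LinearMap.adjoint O)) ∘ₗ
          runAlg m T (fun t => U t.castSucc) (fun t => sgn t.castSucc) O)

/-! Hybrid argument. Run the algorithm on oracle `O_x` from `ι (V_x* w)` and on `O_y` from
`ι z`. The inner product of the two states is `⟪w, V_x z⟫` at the start and `⟪w, V_y z⟫` at the
end, and the unitaries `U_t` preserve it, so `⟪w, (V_x - V_y) z⟫` is the total amount by which
the `T` queries lower it. On the oracle register a direct query lowers `⟪a, b⟫` by
`⟪O_x a, (O_x - O_y) b⟫` and a reverse query by `⟪-a, (O_x - O_y) O_y* b⟫`. Placing these `T`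
pairs of contractions side by side factors `V_x - V_y` through `(O_x - O_y) ⊗ id` with both
factors of norm at most `√T`. -/

open scoped InnerProductSpace

namespace IsUnitaryMap

variable {E : Type*} [NormedAddCommGroup E] [InnerProductSpace ℂ E] [FiniteDimensional ℂ E]
  {f : E →ₗ[ℂ] E}

theorem inner_map_map (hf : IsUnitaryMap f) (a b : E) : ⟪f a, f b⟫_ℂ = ⟪a, b⟫_ℂ := by
  rw [← LinearMap.adjoint_inner_right, ← LinearMap.comp_apply, hf.1, LinearMap.id_apply]

theorem norm_map (hf : IsUnitaryMap f) (a : E) : ‖f a‖ = ‖a‖ :=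
  (f.isometryOfInner hf.inner_map_map).norm_map a

theorem adjoint (hf : IsUnitaryMap f) : IsUnitaryMap (LinearMap.adjoint f) := by
  rw [IsUnitaryMap, LinearMap.adjoint_adjoint]
  exact hf.symm

theorem apply_adjoint_apply (hf : IsUnitaryMap f) (a : E) : f (LinearMap.adjoint f a) = a :=
  LinearMap.congr_fun hf.2 a

end IsUnitaryMap

section PiBlock

variable {ι : Type*} [Fintype ι] {X₁ X₂ : Type*}
  [NormedAddCommGroup X₁] [InnerProductSpace ℂ X₁] [NormedAddCommGroup X₂] [InnerProductSpace ℂ X₂]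

@[simp]
theorem piBlock_apply (Δ : ι → (X₂ →ₗ[ℂ] X₁)) (v : PiLp 2 (fun _ : ι => X₂)) (i : ι) :
    piBlock Δ v i = Δ i (v i) :=
  rfl

theorem norm_piBlock_of_norm_map {f : X₁ →ₗ[ℂ] X₁} (hf : ∀ a, ‖f a‖ = ‖a‖)
    (v : PiLp 2 (fun _ : ι => X₁)) : ‖piBlock (fun _ => f) v‖ = ‖v‖ := by
  simp [PiLp.norm_eq_of_L2, hf]

end PiBlock

section Stacking

variable {X Z : Type*} [NormedAddCommGroup X] [InnerProductSpace ℂ X]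
  [NormedAddCommGroup Z] [InnerProductSpace ℂ Z] {T m : ℕ}

def stackBlocks (g : Fin T → (Z →ₗ[ℂ] PiLp 2 (fun _ : Fin m => X))) :
    Z →ₗ[ℂ] PiLp 2 (fun _ : Fin (T * m) => X) :=
  (WithLp.linearEquiv 2 ℂ (∀ _ : Fin (T * m), X)).symm.toLinearMap ∘ₗ
    LinearMap.pi fun i =>
      LinearMap.proj (finProdFinEquiv.symm i).2 ∘ₗ
        (WithLp.linearEquiv 2 ℂ (∀ _ : Fin m, X)).toLinearMap ∘ₗ g (finProdFinEquiv.symm i).1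

theorem stackBlocks_apply (g : Fin T → (Z →ₗ[ℂ] PiLp 2 (fun _ : Fin m => X))) (w : Z)
    (i : Fin (T * m)) :
    stackBlocks g w i = g (finProdFinEquiv.symm i).1 w (finProdFinEquiv.symm i).2 :=
  rfl

theorem sum_stackBlocks {X' Z' M : Type*} [NormedAddCommGroup X'] [InnerProductSpace ℂ X']
    [NormedAddCommGroup Z'] [InnerProductSpace ℂ Z'] [AddCommMonoid M]
    (g : Fin T → (Z →ₗ[ℂ] PiLp 2 (fun _ : Fin m => X)))
    (h : Fin T → (Z' →ₗ[ℂ] PiLp 2 (fun _ : Fin m => X'))) (F : X → X' → M) (w : Z) (z : Z') :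
    ∑ i, F (stackBlocks g w i) (stackBlocks h z i) = ∑ t, ∑ j, F (g t w j) (h t z j) := by
  simp only [← finProdFinEquiv.sum_comp, Fintype.sum_prod_type, stackBlocks_apply,
    Equiv.symm_apply_apply]

theorem norm_stackBlocks_le {g : Fin T → (Z →ₗ[ℂ] PiLp 2 (fun _ : Fin m => X))} {w : Z}
    (hg : ∀ t, ‖g t w‖ ≤ ‖w‖) : ‖stackBlocks g w‖ ≤ √T * ‖w‖ := by
  have hsq : ‖stackBlocks g w‖ ^ 2 ≤ T * ‖w‖ ^ 2 :=
    calc ‖stackBlocks g w‖ ^ 2 = ∑ t, ‖g t w‖ ^ 2 := by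
          simp only [PiLp.norm_sq_eq_of_L2]
          exact sum_stackBlocks g g (fun a _ => ‖a‖ ^ 2) w w
      _ ≤ ∑ _t : Fin T, ‖w‖ ^ 2 := by gcongr with t; exact hg t
      _ = T * ‖w‖ ^ 2 := by simp
  calc ‖stackBlocks g w‖ ≤ √(T * ‖w‖ ^ 2) := Real.le_sqrt_of_sq_le hsq
    _ = √T * ‖w‖ := by rw [Real.sqrt_mul (Nat.cast_nonneg T), Real.sqrt_sq (norm_nonneg w)]

theorem inner_stackBlocks_piBlock_stackBlocks {X' Z' : Type*} [NormedAddCommGroup X']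
    [InnerProductSpace ℂ X'] [NormedAddCommGroup Z'] [InnerProductSpace ℂ Z']
    (g : Fin T → (Z →ₗ[ℂ] PiLp 2 (fun _ : Fin m => X)))
    (h : Fin T → (Z' →ₗ[ℂ] PiLp 2 (fun _ : Fin m => X'))) (Δ : X' →ₗ[ℂ] X) (w : Z) (z : Z') :
    ⟪stackBlocks g w, piBlock (fun _ => Δ) (stackBlocks h z)⟫_ℂ =
      ∑ t, ⟪g t w, piBlock (fun _ => Δ) (h t z)⟫_ℂ := by
  simp only [PiLp.inner_apply, piBlock_apply]
  exact sum_stackBlocks g h (fun a b => ⟪a, Δ b⟫_ℂ) w z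

end Stacking

section RelGamma2

theorem ofReal_opNorm_sq_le {E F : Type*} [NormedAddCommGroup E] [InnerProductSpace ℂ E]
    [FiniteDimensional ℂ E] [NormedAddCommGroup F] [InnerProductSpace ℂ F] {f : E →ₗ[ℂ] F}
    {r : ℝ} (hr : 0 ≤ r) (hf : ∀ v, ‖f v‖ ≤ r * ‖v‖) :
    ENNReal.ofReal (opNorm f ^ 2) ≤ ENNReal.ofReal (r ^ 2) :=
  ENNReal.ofReal_le_ofReal (pow_le_pow_left₀ (norm_nonneg _)
    ((LinearMap.toContinuousLinearMap f).opNorm_le_bound hr hf) 2)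

variable {D₁ D₂ : Type*} [Fintype D₁] [Fintype D₂] {X₁ X₂ Z₁ Z₂ : Type*}
  [NormedAddCommGroup X₁] [InnerProductSpace ℂ X₁] [FiniteDimensional ℂ X₁]
  [NormedAddCommGroup X₂] [InnerProductSpace ℂ X₂] [FiniteDimensional ℂ X₂]
  [NormedAddCommGroup Z₁] [InnerProductSpace ℂ Z₁] [FiniteDimensional ℂ Z₁]
  [NormedAddCommGroup Z₂] [InnerProductSpace ℂ Z₂] [FiniteDimensional ℂ Z₂]
  {A : D₁ → D₂ → (Z₂ →ₗ[ℂ] Z₁)} {Δ : D₁ → D₂ → (X₂ →ₗ[ℂ] X₁)}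

theorem relGamma2_le_ofReal_sq {k : ℕ} (Υ : D₁ → (Z₁ →ₗ[ℂ] PiLp 2 (fun _ : Fin k => X₁)))
    (Φ : D₂ → (Z₂ →ₗ[ℂ] PiLp 2 (fun _ : Fin k => X₂)))
    (hA : ∀ x y, A x y = LinearMap.adjoint (Υ x) ∘ₗ piBlock (fun _ => Δ x y) ∘ₗ Φ y)
    {r : ℝ} (hr : 0 ≤ r) (hΥ : ∀ x w, ‖Υ x w‖ ≤ r * ‖w‖) (hΦ : ∀ y z, ‖Φ y z‖ ≤ r * ‖z‖) :
    relGamma2 A Δ ≤ ENNReal.ofReal (r ^ 2) := by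
  refine iInf_le_of_le k (iInf_le_of_le Υ (iInf_le_of_le Φ (iInf_le_of_le hA ?_)))
  exact sup_le (iSup_le fun x => ofReal_opNorm_sq_le hr (hΥ x))
    (iSup_le fun y => ofReal_opNorm_sq_le hr (hΦ y))

theorem relGamma2_le_of_inner_eq_sum {T m : ℕ}
    (L : D₁ → Fin T → (Z₁ →ₗ[ℂ] PiLp 2 (fun _ : Fin m => X₁)))
    (R : D₂ → Fin T → (Z₂ →ₗ[ℂ] PiLp 2 (fun _ : Fin m => X₂)))
    (hL : ∀ x t w, ‖L x t w‖ ≤ ‖w‖) (hR : ∀ y t z, ‖R y t z‖ ≤ ‖z‖)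
    (hA : ∀ x y w z, ⟪w, A x y z⟫_ℂ = ∑ t, ⟪L x t w, piBlock (fun _ => Δ x y) (R y t z)⟫_ℂ) :
    relGamma2 A Δ ≤ T := by
  have hfac : ∀ x y, A x y = LinearMap.adjoint (stackBlocks (L x)) ∘ₗ
      piBlock (fun _ => Δ x y) ∘ₗ stackBlocks (R y) := by
    refine fun x y => LinearMap.ext fun z => ext_inner_left ℂ fun w => ?_
    rw [LinearMap.comp_apply, LinearMap.comp_apply, LinearMap.adjoint_inner_right,
      inner_stackBlocks_piBlock_stackBlocks, hA]
  calc relGamma2 A Δ ≤ ENNReal.ofReal (√T ^ 2) :=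
        relGamma2_le_ofReal_sq _ _ hfac (Real.sqrt_nonneg T)
          (fun x _ => norm_stackBlocks_le (hL x · _)) (fun y _ => norm_stackBlocks_le (hR y · _))
    _ = T := by rw [Real.sq_sqrt (Nat.cast_nonneg T), ENNReal.ofReal_natCast]

end RelGamma2

section Queries

variable {X S : Type*} [NormedAddCommGroup X] [InnerProductSpace ℂ X]
  [NormedAddCommGroup S] [InnerProductSpace ℂ S] {m : ℕ}

variable (S) in
def oracleRegister : stateSpace S X m →ₗ[ℂ] PiLp 2 (fun _ : Fin m => X) :=
  LinearMap.snd ℂ S _ ∘ₗ (WithLp.linearEquiv 2 ℂ (S × PiLp 2 (fun _ : Fin m => X))).toLinearMap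

@[simp]
theorem oracleRegister_apply (ψ : stateSpace S X m) : oracleRegister S ψ = ψ.snd :=
  rfl

theorem norm_oracleRegister_le (ψ : stateSpace S X m) : ‖oracleRegister S ψ‖ ≤ ‖ψ‖ :=
  WithLp.norm_snd_le _ ψ

theorem inner_queryOp_queryOp (O O' : X →ₗ[ℂ] X) (a b : stateSpace S X m) :
    ⟪queryOp m O a, queryOp m O' b⟫_ℂ =
      ⟪a.fst, b.fst⟫_ℂ + ⟪piBlock (fun _ => O) a.snd, piBlock (fun _ => O') b.snd⟫_ℂ :=
  rfl

variable [FiniteDimensional ℂ X]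

def signedOracle (s : Bool) (O : X →ₗ[ℂ] X) : X →ₗ[ℂ] X :=
  if s then O else LinearMap.adjoint O

def hybridLeft (s : Bool) (O : X →ₗ[ℂ] X) : X →ₗ[ℂ] X :=
  if s then O else -LinearMap.id

def hybridRight (s : Bool) (O : X →ₗ[ℂ] X) : X →ₗ[ℂ] X :=
  if s then LinearMap.id else LinearMap.adjoint O

theorem IsUnitaryMap.signedOracle {O : X →ₗ[ℂ] X} (hO : IsUnitaryMap O) (s : Bool) :
    IsUnitaryMap (signedOracle s O) := by
  cases s
  exacts [hO.adjoint, hO]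

theorem inner_sub_inner_signedOracle {O O' : X →ₗ[ℂ] X} (hO : IsUnitaryMap O)
    (hO' : IsUnitaryMap O') (s : Bool) (a b : X) :
    ⟪a, b⟫_ℂ - ⟪signedOracle s O a, signedOracle s O' b⟫_ℂ =
      ⟪hybridLeft s O a, (O - O') (hybridRight s O' b)⟫_ℂ := by
  cases s
  · simp only [signedOracle, hybridLeft, hybridRight, Bool.false_eq_true, if_false,
      LinearMap.sub_apply, hO'.apply_adjoint_apply, LinearMap.neg_apply, LinearMap.id_apply,
      inner_neg_left, inner_sub_right, LinearMap.adjoint_inner_left]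
    ring
  · simp only [signedOracle, hybridLeft, hybridRight, if_true, LinearMap.sub_apply,
      LinearMap.id_apply, inner_sub_right, hO.inner_map_map]

theorem norm_hybridLeft {O : X →ₗ[ℂ] X} (hO : IsUnitaryMap O) (s : Bool) (a : X) :
    ‖hybridLeft s O a‖ = ‖a‖ := by
  cases s
  · simp [hybridLeft]
  · exact hO.norm_map a

theorem norm_hybridRight {O : X →ₗ[ℂ] X} (hO : IsUnitaryMap O) (s : Bool) (a : X) :
    ‖hybridRight s O a‖ = ‖a‖ := by
  cases s
  · exact hO.adjoint.norm_map a
  · rfl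

theorem norm_queryOp {O : X →ₗ[ℂ] X} (hO : IsUnitaryMap O) (a : stateSpace S X m) :
    ‖queryOp m O a‖ = ‖a‖ := by
  rw [← sq_eq_sq₀ (norm_nonneg _) (norm_nonneg _), WithLp.prod_norm_sq_eq_of_L2,
    WithLp.prod_norm_sq_eq_of_L2]
  exact congrArg (‖a.fst‖ ^ 2 + · ^ 2) (norm_piBlock_of_norm_map hO.norm_map a.snd)

theorem inner_sub_inner_queryOp {O O' : X →ₗ[ℂ] X} (hO : IsUnitaryMap O)
    (hO' : IsUnitaryMap O') (s : Bool) (a b : stateSpace S X m) :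
    ⟪a, b⟫_ℂ - ⟪queryOp m (signedOracle s O) a, queryOp m (signedOracle s O') b⟫_ℂ =
      ⟪piBlock (fun _ => hybridLeft s O) (oracleRegister S a),
        piBlock (fun _ => O - O')
          (piBlock (fun _ => hybridRight s O') (oracleRegister S b))⟫_ℂ := by
  rw [inner_queryOp_queryOp, show ⟪a, b⟫_ℂ = ⟪a.fst, b.fst⟫_ℂ + ⟪a.snd, b.snd⟫_ℂ from rfl]
  simp only [PiLp.inner_apply, piBlock_apply, oracleRegister_apply,
    ← inner_sub_inner_signedOracle hO hO' s, Finset.sum_sub_distrib]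
  ring

end Queries

section Algorithm

variable {X S : Type*} [NormedAddCommGroup X] [InnerProductSpace ℂ X] [FiniteDimensional ℂ X]
  [NormedAddCommGroup S] [InnerProductSpace ℂ S] {m : ℕ}

theorem runAlg_succ (T : ℕ) (U : Fin (T + 2) → (stateSpace S X m →ₗ[ℂ] stateSpace S X m))
    (sgn : Fin (T + 1) → Bool) (O : X →ₗ[ℂ] X) :
    runAlg m (T + 1) U sgn O = U (Fin.last (T + 1)) ∘ₗ
      queryOp m (signedOracle (sgn (Fin.last T)) O) ∘ₗ
        runAlg m T (fun t => U t.castSucc) (fun t => sgn t.castSucc) O := by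
  rw [runAlg]
  cases sgn (Fin.last T) <;> rfl

variable [FiniteDimensional ℂ S]

theorem norm_runAlg {T : ℕ} {U : Fin (T + 1) → (stateSpace S X m →ₗ[ℂ] stateSpace S X m)}
    (hU : ∀ t, IsUnitaryMap (U t)) (sgn : Fin T → Bool) {O : X →ₗ[ℂ] X} (hO : IsUnitaryMap O)
    (a : stateSpace S X m) : ‖runAlg m T U sgn O a‖ = ‖a‖ := by
  induction T with
  | zero => exact (hU 0).norm_map a
  | succ T ih =>
    rw [runAlg_succ, LinearMap.comp_apply, LinearMap.comp_apply, (hU _).norm_map,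
      norm_queryOp (hO.signedOracle _), ih (fun t => hU t.castSucc)]

theorem exists_inner_sub_inner_runAlg_eq_sum {D : Type*} {O : D → (X →ₗ[ℂ] X)}
    (hO : ∀ x, IsUnitaryMap (O x)) {T : ℕ}
    {U : Fin (T + 1) → (stateSpace S X m →ₗ[ℂ] stateSpace S X m)}
    (hU : ∀ t, IsUnitaryMap (U t)) (sgn : Fin T → Bool) :
    ∃ L R : D → Fin T → (stateSpace S X m →ₗ[ℂ] PiLp 2 (fun _ : Fin m => X)),
      (∀ x t a, ‖L x t a‖ ≤ ‖a‖) ∧ (∀ y t b, ‖R y t b‖ ≤ ‖b‖) ∧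
      ∀ x y a b, ⟪a, b⟫_ℂ - ⟪runAlg m T U sgn (O x) a, runAlg m T U sgn (O y) b⟫_ℂ =
        ∑ t, ⟪L x t a, piBlock (fun _ => O x - O y) (R y t b)⟫_ℂ := by
  induction T with
  | zero =>
    refine ⟨fun _ => Fin.elim0, fun _ => Fin.elim0, fun _ t => t.elim0, fun _ t => t.elim0, ?_⟩
    intro x y a b
    simp [runAlg, (hU 0).inner_map_map]
  | succ T ih =>
    obtain ⟨L, R, hL, hR, hLR⟩ := ih (fun t => hU t.castSucc) (fun t => sgn t.castSucc)
    set s := sgn (Fin.last T)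
    set A := fun x => runAlg m T (fun t => U t.castSucc) (fun t => sgn t.castSucc) (O x)
    have hstep {f : X →ₗ[ℂ] X} (hf : ∀ v, ‖f v‖ = ‖v‖) (x : D) (a : stateSpace S X m) :
        ‖piBlock (fun _ => f) (oracleRegister S (A x a))‖ ≤ ‖a‖ :=
      calc ‖piBlock (fun _ => f) (oracleRegister S (A x a))‖ = ‖oracleRegister S (A x a)‖ :=
            norm_piBlock_of_norm_map hf _
        _ ≤ ‖A x a‖ := norm_oracleRegister_le _
        _ = ‖a‖ := norm_runAlg (fun t => hU t.castSucc) _ (hO x) a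
    refine ⟨fun x => Fin.snoc (α := fun _ => _) (L x)
        (piBlock (fun _ => hybridLeft s (O x)) ∘ₗ oracleRegister S ∘ₗ A x),
      fun y => Fin.snoc (α := fun _ => _) (R y)
        (piBlock (fun _ => hybridRight s (O y)) ∘ₗ oracleRegister S ∘ₗ A y), ?_, ?_, ?_⟩
    · intro x t a
      refine Fin.lastCases ?_ (fun t => ?_) t
      · simpa using hstep (norm_hybridLeft (hO x) s) x a
      · simpa using hL x t a
    · intro y t b
      refine Fin.lastCases ?_ (fun t => ?_) t
      · simpa using hstep (norm_hybridRight (hO y) s) y b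
      · simpa using hR y t b
    · intro x y a b
      rw [Fin.sum_univ_castSucc]
      simp only [Fin.snoc_castSucc, Fin.snoc_last, ← hLR, LinearMap.comp_apply,
        ← inner_sub_inner_queryOp (hO x) (hO y)]
      rw [runAlg_succ, runAlg_succ, LinearMap.comp_apply, LinearMap.comp_apply,
        LinearMap.comp_apply, LinearMap.comp_apply, (hU _).inner_map_map]
      ring

end Algorithm

/-- Adversary lower bound for exact unitary implementation: if a
`T`-query quantum algorithm with oracle acting on `X`, with state space `H`, together
with an isometric embedding `ι : Z → H`, implements the unitary `V_x` on (the copy of)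
`Z` whenever its oracle is replaced by `O_x`, then `γ₂(V_x − V_y | O_x − O_y) ≤ T`. -/
theorem statement11 {D : Type} [Fintype D] {X Z S : Type}
    [NormedAddCommGroup X] [InnerProductSpace ℂ X] [FiniteDimensional ℂ X]
    [NormedAddCommGroup Z] [InnerProductSpace ℂ Z] [FiniteDimensional ℂ Z]
    [NormedAddCommGroup S] [InnerProductSpace ℂ S] [FiniteDimensional ℂ S]
    (m T : ℕ)
    (O : D → (X →ₗ[ℂ] X)) (hO : ∀ x, IsUnitaryMap (O x))
    (V : D → (Z →ₗ[ℂ] Z)) (hV : ∀ x, IsUnitaryMap (V x))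
    (U : Fin (T + 1) → (stateSpace S X m →ₗ[ℂ] stateSpace S X m))
    (hU : ∀ t, IsUnitaryMap (U t)) (sgn : Fin T → Bool)
    (ι : Z →ₗᵢ[ℂ] stateSpace S X m)
    (hrun : ∀ x (z : Z), runAlg m T U sgn (O x) (ι z) = ι (V x z)) :
    relGamma2 (fun x y => V x - V y) (fun x y => O x - O y) ≤ (T : ℝ≥0∞) := by
  obtain ⟨L, R, hL, hR, hLR⟩ := exists_inner_sub_inner_runAlg_eq_sum hO hU sgn
  refine relGamma2_le_of_inner_eq_sum
    (fun x t => L x t ∘ₗ ι.toLinearMap ∘ₗ LinearMap.adjoint (V x))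
    (fun y t => R y t ∘ₗ ι.toLinearMap) (fun x t w => ?_) (fun y t z => ?_) (fun x y w z => ?_)
  · calc ‖L x t (ι (LinearMap.adjoint (V x) w))‖ ≤ ‖ι (LinearMap.adjoint (V x) w)‖ := hL x t _
      _ = ‖w‖ := by rw [ι.norm_map, (hV x).adjoint.norm_map]
  · exact (hR y t _).trans_eq (ι.norm_map z)
  · have hx : runAlg m T U sgn (O x) (ι (LinearMap.adjoint (V x) w)) = ι w := by
      rw [hrun, (hV x).apply_adjoint_apply]
    have hinner : ⟪w, V x z⟫_ℂ - ⟪w, V y z⟫_ℂ = ⟪ι (LinearMap.adjoint (V x) w), ι z⟫_ℂ -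
        ⟪runAlg m T U sgn (O x) (ι (LinearMap.adjoint (V x) w)),
          runAlg m T U sgn (O y) (ι z)⟫_ℂ := by
      rw [hx, hrun, ι.inner_map_map, ι.inner_map_map, LinearMap.adjoint_inner_left]
    rw [LinearMap.sub_apply, inner_sub_right, hinner]
    exact hLR x y _ _

end
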